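/- arXiv:2101.03971 — 2 statements merged into one kernel-verified Lean document; each statement's English description precedes it below -/
import Mathlib

section
/- The integral ∫₀^π f(θ₀) dθ₀ with f(θ₀) = (1/(2π²))·(1-σ²)/(1+σ²-2σcos(θ₀))² multiplied by the spherical volume factor 4π·sin²(θ₀) equals 1; that is, 4π ∫₀^π (1/(2π²))·(1-σ²)·sin²(θ₀)/(1+σ²-2σcos(θ₀))² dθ₀ = 1 for all σ ∈ [0,1). -/
/-!
For `σ ≠ 0`, `|σ| < 1`, the integrand `sin² θ / (1 + σ² - 2σ cos θ)²` has the antiderivative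
`θ / (2(1 - σ²)) + (1 + σ²) / (2σ²(1 - σ²)) · arctan (σ sin θ / (1 - σ cos θ)) - sin θ / (2σ(1 + σ² - 2σ cos θ))`,
smooth on all of `ℝ` because `1 - σ cos θ > 0` (the arctan is the argument of `1 - σ e^{-iθ}`).
Its last two terms vanish at `0` and `π`, so the integral over `[0, π]` is `π / (2(1 - σ²))`,
which for `σ = 0` is just `∫₀^π sin² = π / 2`. The factor `4π / (2π²) · (1 - σ²)` turns this into `1`.
-/

open Real

namespace Real

lemma one_add_sq_sub_two_mul_cos_eq (σ θ : ℝ) :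
    1 + σ ^ 2 - 2 * σ * cos θ = (1 - σ * cos θ) ^ 2 + (σ * sin θ) ^ 2 := by
  linear_combination (-σ ^ 2) * sin_sq_add_cos_sq θ

lemma one_sub_mul_cos_pos {σ : ℝ} (hσ : |σ| < 1) (θ : ℝ) : 0 < 1 - σ * cos θ := by
  have := (abs_mul σ (cos θ)).trans_le (mul_le_of_le_one_right (abs_nonneg σ) (abs_cos_le_one θ))
  linarith [le_abs_self (σ * cos θ)]

lemma one_add_sq_sub_two_mul_cos_pos {σ : ℝ} (hσ : |σ| < 1) (θ : ℝ) :
    0 < 1 + σ ^ 2 - 2 * σ * cos θ := by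
  rw [one_add_sq_sub_two_mul_cos_eq]
  have := one_sub_mul_cos_pos hσ θ
  positivity

lemma hasDerivAt_arctan_sin_div_one_sub_cos {σ θ : ℝ} (h : 1 - σ * cos θ ≠ 0) :
    HasDerivAt (fun x => arctan (σ * sin x / (1 - σ * cos x)))
      ((σ * cos θ - σ ^ 2) / (1 + σ ^ 2 - 2 * σ * cos θ)) θ := by
  have hden : HasDerivAt (fun x => 1 - σ * cos x) (σ * sin θ) θ := by
    simpa using ((hasDerivAt_cos θ).const_mul σ).const_sub 1
  convert (((hasDerivAt_sin θ).const_mul σ).div hden h).arctan using 1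
  · rfl
  rw [Pi.div_apply, one_add_sq_sub_two_mul_cos_eq]
  field_simp
  linear_combination σ ^ 2 * sin_sq_add_cos_sq θ

noncomputable def sinSqDivSqAntideriv (σ θ : ℝ) : ℝ :=
  θ / (2 * (1 - σ ^ 2)) + (1 + σ ^ 2) / (2 * σ ^ 2 * (1 - σ ^ 2)) *
    arctan (σ * sin θ / (1 - σ * cos θ)) - sin θ / (2 * σ * (1 + σ ^ 2 - 2 * σ * cos θ))

lemma hasDerivAt_sinSqDivSqAntideriv {σ : ℝ} (hσ0 : σ ≠ 0) (hσ : |σ| < 1) (θ : ℝ) :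
    HasDerivAt (sinSqDivSqAntideriv σ) (sin θ ^ 2 / (1 + σ ^ 2 - 2 * σ * cos θ) ^ 2) θ := by
  have hD := (one_add_sq_sub_two_mul_cos_pos hσ θ).ne'
  have hσ2 : 1 - σ ^ 2 ≠ 0 := (sub_pos.2 ((sq_lt_one_iff_abs_lt_one σ).2 hσ)).ne'
  have hDderiv : HasDerivAt (fun x => 2 * σ * (1 + σ ^ 2 - 2 * σ * cos x))
      (2 * σ * (2 * σ * sin θ)) θ := by
    simpa using (((hasDerivAt_cos θ).const_mul (2 * σ)).const_sub (1 + σ ^ 2)).const_mul (2 * σ)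
  refine ((((hasDerivAt_id θ).div_const (2 * (1 - σ ^ 2))).add
    ((hasDerivAt_arctan_sin_div_one_sub_cos (one_sub_mul_cos_pos hσ θ).ne').const_mul
      ((1 + σ ^ 2) / (2 * σ ^ 2 * (1 - σ ^ 2))))).sub
    ((hasDerivAt_sin θ).div hDderiv (by positivity))).congr_deriv ?_
  field_simp
  ring

theorem integral_sin_sq_div_one_add_sq_sub_two_mul_cos_sq {σ : ℝ} (hσ : |σ| < 1) :
    ∫ θ in (0 : ℝ)..π, sin θ ^ 2 / (1 + σ ^ 2 - 2 * σ * cos θ) ^ 2 = π / (2 * (1 - σ ^ 2)) := by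
  rcases eq_or_ne σ 0 with rfl | hσ0
  · norm_num [integral_sin_sq]
  have hD := one_add_sq_sub_two_mul_cos_pos hσ
  rw [intervalIntegral.integral_eq_sub_of_hasDerivAt
    (fun θ _ => hasDerivAt_sinSqDivSqAntideriv hσ0 hσ θ)
    ((by fun_prop (disch := exact fun θ => (pow_pos (hD θ) 2).ne') :
      Continuous fun θ => sin θ ^ 2 / (1 + σ ^ 2 - 2 * σ * cos θ) ^ 2).intervalIntegrable 0 π)]
  simp [sinSqDivSqAntideriv]

end Real

theorem normal_density_integrates_to_one (σ : ℝ) (hσ : σ ∈ Set.Ico (0:ℝ) 1) :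
    4 * π * ∫ θ₀ in (0:ℝ)..π,
        (1 / (2 * π ^ 2)) * (1 - σ ^ 2) * Real.sin θ₀ ^ 2 /
          (1 + σ ^ 2 - 2 * σ * Real.cos θ₀) ^ 2 = 1 := by
  have hσ_abs : |σ| < 1 := abs_lt.2 ⟨by linarith [hσ.1], hσ.2⟩
  have hσ2 : 1 - σ ^ 2 ≠ 0 := (sub_pos.2 ((sq_lt_one_iff_abs_lt_one σ).2 hσ_abs)).ne'
  simp_rw [mul_div_assoc]
  rw [intervalIntegral.integral_const_mul,
    integral_sin_sq_div_one_add_sq_sub_two_mul_cos_sq hσ_abs]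
  field_simp
  norm_num
end

section
/- The variance of a one-qubit quantum error with density f(θ₀) on the 3-sphere, acting on one qubit of an n-qubit state, is V = 2 - 8π ∫₀^π f(θ₀)cos(θ₀)sin²(θ₀) dθ₀, independent of the initial n-qubit state. -/
open Real Complex

/-- The one-qubit error operator `W` of the paper. -/
noncomputable def Wmat (θ₀ θ₁ θ₂ : ℝ) : Matrix (Fin 2) (Fin 2) ℂ :=
  !![(Real.cos θ₀ : ℂ) + Complex.I * (Real.sin θ₀ * Real.cos θ₁ : ℝ),
     (-(Real.sin θ₀ * Real.sin θ₁ * Real.cos θ₂) : ℝ) +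
       Complex.I * (Real.sin θ₀ * Real.sin θ₁ * Real.sin θ₂ : ℝ);
     ((Real.sin θ₀ * Real.sin θ₁ * Real.cos θ₂) : ℝ) +
       Complex.I * (Real.sin θ₀ * Real.sin θ₁ * Real.sin θ₂ : ℝ),
     (Real.cos θ₀ : ℂ) - Complex.I * (Real.sin θ₀ * Real.cos θ₁ : ℝ)]

/-- The operator `𝒲 = W ⊗ I^{⊗(n-1)}` acting on the qubit `0` of an `n`-qubit state,
realized as a matrix indexed by `Fin n → Fin 2`. -/
noncomputable def Wone (n : ℕ) (hn : 0 < n) (θ₀ θ₁ θ₂ : ℝ) :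
    Matrix (Fin n → Fin 2) (Fin n → Fin 2) ℂ :=
  fun j k =>
    Wmat θ₀ θ₁ θ₂ (j ⟨0, hn⟩) (k ⟨0, hn⟩) *
      (if ∀ u : Fin n, u ≠ ⟨0, hn⟩ → j u = k u then 1 else 0)

/-!
`W` is the `SU(2)` matrix of the unit quaternion
`(cos θ₀, sin θ₀ cos θ₁, sin θ₀ sin θ₁ cos θ₂, sin θ₀ sin θ₁ sin θ₂)`, so for every `x ∈ ℂ²`
we have `‖W x - x‖² = 2‖x‖² - 2 Re ⟪x, W x⟫ = (2 - 2 cos θ₀) ‖x‖²`. The operator `W ⊗ I` acts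
separately on each copy of `ℂ²` indexed by the states of the other qubits, so the same identity
holds for it, independently of `Φ`. The integrand is then `f θ₀ (2 - 2 cos θ₀) sin² θ₀ sin θ₁`,
and integrating out `θ₁, θ₂` gives the factor `4π`; the normalisation of `f` turns the first term
into `2`.
-/

section OnSite

variable {ι d : Type*} [DecidableEq ι]

theorem funSplitAt_symm_eq_iff_of_ne (i : ι) (b b' : d) (g g' : { j // j ≠ i } → d) :
    (∀ u, u ≠ i → (Equiv.funSplitAt i d).symm (b, g) u = (Equiv.funSplitAt i d).symm (b', g') u)
      ↔ g = g' := by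
  simp only [funext_iff, Subtype.forall]
  refine forall_congr' fun u => forall_congr' fun hu => ?_
  simp [Equiv.funSplitAt, Equiv.piSplitAt, hu]

/-- The component of `v` in the copy of `ℂ^d` where the sites other than `i` are in state `g`. -/
noncomputable def fiber (i : ι) (v : EuclideanSpace ℂ (ι → d)) (g : { j // j ≠ i } → d) :
    EuclideanSpace ℂ d :=
  WithLp.toLp 2 fun b => v ((Equiv.funSplitAt i d).symm (b, g))

variable [Fintype ι] [DecidableEq d]

/-- `M ⊗ I`, with `M` acting on the tensor factor at site `i`. -/
noncomputable def onSite (i : ι) (M : Matrix d d ℂ) : Matrix (ι → d) (ι → d) ℂ :=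
  fun j k => M (j i) (k i) * if ∀ u, u ≠ i → j u = k u then 1 else 0

theorem onSite_funSplitAt_symm (i : ι) (M : Matrix d d ℂ) (b b' : d)
    (g g' : { j // j ≠ i } → d) :
    onSite i M ((Equiv.funSplitAt i d).symm (b, g)) ((Equiv.funSplitAt i d).symm (b', g')) =
      M b b' * if g = g' then 1 else 0 := by
  simp only [onSite, funSplitAt_symm_eq_iff_of_ne]
  simp [Equiv.funSplitAt, Equiv.piSplitAt]

variable [Fintype d]

omit [DecidableEq d] in
theorem norm_sq_eq_sum_norm_sq_fiber (i : ι) (v : EuclideanSpace ℂ (ι → d)) :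
    ‖v‖ ^ 2 = ∑ g, ‖fiber i v g‖ ^ 2 := by
  simp only [EuclideanSpace.norm_sq_eq, fiber]
  rw [← (Equiv.funSplitAt i d).symm.sum_comp, Fintype.sum_prod_type, Finset.sum_comm]

theorem fiber_toEuclideanLin_onSite (i : ι) (M : Matrix d d ℂ) (v : EuclideanSpace ℂ (ι → d))
    (g : { j // j ≠ i } → d) :
    fiber i (Matrix.toEuclideanLin (onSite i M) v) g = Matrix.toEuclideanLin M (fiber i v g) := by
  ext b
  change ∑ k, _ = ∑ b', _
  rw [← (Equiv.funSplitAt i d).symm.sum_comp, Fintype.sum_prod_type]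
  simp [onSite_funSplitAt_symm, fiber]

theorem norm_toEuclideanLin_onSite_sub_sq (i : ι) {M : Matrix d d ℂ} {c : ℝ}
    (hM : ∀ x, ‖Matrix.toEuclideanLin M x - x‖ ^ 2 = c * ‖x‖ ^ 2)
    (Φ : EuclideanSpace ℂ (ι → d)) :
    ‖Matrix.toEuclideanLin (onSite i M) Φ - Φ‖ ^ 2 = c * ‖Φ‖ ^ 2 := by
  have fiber_sub : ∀ v w : EuclideanSpace ℂ (ι → d), ∀ g,
      fiber i (v - w) g = fiber i v g - fiber i w g := fun _ _ _ => rfl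
  simp only [norm_sq_eq_sum_norm_sq_fiber i, Finset.mul_sum, fiber_sub,
    fiber_toEuclideanLin_onSite, hM]

end OnSite

theorem Wone_eq_onSite (n : ℕ) (hn : 0 < n) (θ₀ θ₁ θ₂ : ℝ) :
    Wone n hn θ₀ θ₁ θ₂ = onSite ⟨0, hn⟩ (Wmat θ₀ θ₁ θ₂) := by
  ext j k
  simp only [Wone, onSite]
  -- the two `if`s differ only in their `Decidable` instances
  congr

noncomputable def quaternionMatrix (c p q r : ℝ) : Matrix (Fin 2) (Fin 2) ℂ :=
  !![(c : ℂ) + Complex.I * (p : ℝ), ((-q : ℝ) : ℂ) + Complex.I * (r : ℝ);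
     (q : ℂ) + Complex.I * (r : ℝ), (c : ℂ) - Complex.I * (p : ℝ)]

theorem norm_toEuclideanLin_quaternionMatrix_sub_sq {c p q r : ℝ}
    (h : c ^ 2 + p ^ 2 + q ^ 2 + r ^ 2 = 1) (x : EuclideanSpace ℂ (Fin 2)) :
    ‖Matrix.toEuclideanLin (quaternionMatrix c p q r) x - x‖ ^ 2 = (2 - 2 * c) * ‖x‖ ^ 2 := by
  simp only [EuclideanSpace.norm_sq_eq, Fin.sum_univ_two, ← Complex.normSq_eq_norm_sq]
  simp only [Matrix.toEuclideanLin, quaternionMatrix, Matrix.ofLp_toLpLin, Matrix.toLin'_apply,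
    Matrix.mulVec, dotProduct, Matrix.of_apply, Matrix.cons_val', Matrix.cons_val_fin_one,
    Matrix.cons_val_zero, Matrix.cons_val_one, Fin.sum_univ_two, PiLp.sub_apply, normSq_apply,
    add_re, sub_re, neg_re, mul_re, add_im, sub_im, neg_im, mul_im, ofReal_re, ofReal_im, I_re, I_im,
    ofReal_neg]
  linear_combination ((x 0).re ^ 2 + (x 0).im ^ 2 + (x 1).re ^ 2 + (x 1).im ^ 2) * h

theorem Wmat_eq_quaternionMatrix (θ₀ θ₁ θ₂ : ℝ) :
    Wmat θ₀ θ₁ θ₂ = quaternionMatrix (Real.cos θ₀) (Real.sin θ₀ * Real.cos θ₁)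
      (Real.sin θ₀ * Real.sin θ₁ * Real.cos θ₂) (Real.sin θ₀ * Real.sin θ₁ * Real.sin θ₂) := rfl

theorem sum_sq_hyperspherical_eq_one (θ₀ θ₁ θ₂ : ℝ) :
    Real.cos θ₀ ^ 2 + (Real.sin θ₀ * Real.cos θ₁) ^ 2
      + (Real.sin θ₀ * Real.sin θ₁ * Real.cos θ₂) ^ 2 + (Real.sin θ₀ * Real.sin θ₁ * Real.sin θ₂) ^ 2
      = 1 := by
  linear_combination Real.sin_sq_add_cos_sq θ₀ + Real.sin θ₀ ^ 2 * Real.sin_sq_add_cos_sq θ₁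
    + Real.sin θ₀ ^ 2 * Real.sin θ₁ ^ 2 * Real.sin_sq_add_cos_sq θ₂

theorem norm_toEuclideanLin_Wone_sub_sq (n : ℕ) (hn : 0 < n) (θ₀ θ₁ θ₂ : ℝ)
    (Φ : EuclideanSpace ℂ (Fin n → Fin 2)) :
    ‖Matrix.toEuclideanLin (Wone n hn θ₀ θ₁ θ₂) Φ - Φ‖ ^ 2 = (2 - 2 * Real.cos θ₀) * ‖Φ‖ ^ 2 := by
  rw [Wone_eq_onSite, Wmat_eq_quaternionMatrix]
  exact norm_toEuclideanLin_onSite_sub_sq _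
    (norm_toEuclideanLin_quaternionMatrix_sub_sq (sum_sq_hyperspherical_eq_one θ₀ θ₁ θ₂)) Φ

theorem integral_hyperspherical_of_radial (h : ℝ → ℝ) :
    (∫ θ₀ in (0:ℝ)..π, ∫ θ₁ in (0:ℝ)..π, ∫ _θ₂ in (0:ℝ)..(2 * π), h θ₀ * Real.sin θ₁) =
      4 * π * ∫ θ₀ in (0:ℝ)..π, h θ₀ := by
  simp only [intervalIntegral.integral_const, smul_eq_mul, sub_zero,
    intervalIntegral.integral_const_mul, integral_sin, Real.cos_pi, Real.cos_zero]
  rw [← intervalIntegral.integral_const_mul]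
  congr 1; ext θ₀; ring

theorem variance_one_qubit_error (n : ℕ) (hn : 0 < n) (f : ℝ → ℝ)
    (hf : 4 * π * ∫ θ₀ in (0:ℝ)..π, f θ₀ * Real.sin θ₀ ^ 2 = 1)
    (Φ : EuclideanSpace ℂ (Fin n → Fin 2)) (hΦ : ‖Φ‖ = 1) :
    (∫ θ₀ in (0:ℝ)..π, ∫ θ₁ in (0:ℝ)..π, ∫ θ₂ in (0:ℝ)..(2 * π),
        f θ₀ * ‖Matrix.toEuclideanLin (Wone n hn θ₀ θ₁ θ₂) Φ - Φ‖ ^ 2 *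
          Real.sin θ₀ ^ 2 * Real.sin θ₁) =
      2 - 8 * π * ∫ θ₀ in (0:ℝ)..π, f θ₀ * Real.cos θ₀ * Real.sin θ₀ ^ 2 := by
  have hF : IntervalIntegrable (fun θ₀ => f θ₀ * Real.sin θ₀ ^ 2) MeasureTheory.volume 0 π :=
    intervalIntegral.intervalIntegrable_of_integral_ne_zero fun h => by simp [h] at hf
  have hG : IntervalIntegrable (fun θ₀ => f θ₀ * Real.cos θ₀ * Real.sin θ₀ ^ 2)
      MeasureTheory.volume 0 π := by
    simpa only [mul_right_comm] using hF.mul_continuousOn Real.continuous_cos.continuousOn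
  calc _ = ∫ θ₀ in (0:ℝ)..π, ∫ θ₁ in (0:ℝ)..π, ∫ _θ₂ in (0:ℝ)..(2 * π),
        (2 * (f θ₀ * Real.sin θ₀ ^ 2) - 2 * (f θ₀ * Real.cos θ₀ * Real.sin θ₀ ^ 2))
          * Real.sin θ₁ := by
        refine intervalIntegral.integral_congr fun θ₀ _ => intervalIntegral.integral_congr
          fun θ₁ _ => intervalIntegral.integral_congr fun θ₂ _ => ?_
        simp only [norm_toEuclideanLin_Wone_sub_sq, hΦ]
        ring
    _ = 2 - 8 * π * ∫ θ₀ in (0:ℝ)..π, f θ₀ * Real.cos θ₀ * Real.sin θ₀ ^ 2 := by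
        rw [integral_hyperspherical_of_radial, intervalIntegral.integral_sub (hF.const_mul 2)
          (hG.const_mul 2), intervalIntegral.integral_const_mul, intervalIntegral.integral_const_mul]
        linear_combination 2 * hf
end
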